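/- Base case of the normal-form recovery: with H_1 = Σ_j u_j(x_j²+ξ_j²) (u_j > 0 linearly independent over ℚ) and V_2 = Σ_{|k|=2} c_k x^{2k} the quartic part of the potential, the first normal-form term is H_2 = Σ_{|k|=2} c_k 4^{−2} Π_j C(2k_j,k_j) |z|^{2k} in complex coordinates z_j = x_j + iξ_j. Hence H_2 determines the coefficients c_k, i.e., the quartic Taylor coefficients of V. -/

import Mathlib

open MvPolynomial

def LinIndepQ {n : ℕ} (u : Fin n → ℝ) : Prop :=
  ∀ q : Fin n → ℚ, (∑ j, (q j : ℝ) * u j) = 0 → ∀ j, q j = 0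

noncomputable def LV {n : ℕ} (u : Fin n → ℝ)
    (P : MvPolynomial (Fin n ⊕ Fin n) ℂ) : MvPolynomial (Fin n ⊕ Fin n) ℂ :=
  C Complex.I * ∑ j, C (u j : ℂ) *
    (X (Sum.inl j) * pderiv (Sum.inl j) P - X (Sum.inr j) * pderiv (Sum.inr j) P)

def IsDiagExp {n : ℕ} (d : (Fin n ⊕ Fin n) →₀ ℕ) : Prop :=
  ∀ j, d (Sum.inl j) = d (Sum.inr j)

def IsOffDiagPoly {n : ℕ} (N : ℕ) (G : MvPolynomial (Fin n ⊕ Fin n) ℂ) : Prop :=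
  ∀ d ∈ G.support, (∑ v ∈ d.support, d v) = 2 * N ∧ ¬ IsDiagExp d

def IsDiagPoly {n : ℕ} (N : ℕ) (H : MvPolynomial (Fin n ⊕ Fin n) ℂ) : Prop :=
  ∀ d ∈ H.support, (∑ v ∈ d.support, d v) = 2 * N ∧ IsDiagExp d

noncomputable def diagExp {n : ℕ} (α : Fin n → ℕ) : (Fin n ⊕ Fin n) →₀ ℕ :=
  Finsupp.equivFunOnFinite.symm (Sum.elim α α)

/-- The substitution `x_j = (z_j + z̄_j)/2` turning a real polynomial in `x` into
a complex polynomial in `z, z̄`. -/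
noncomputable def xToZ {n : ℕ} :
    MvPolynomial (Fin n) ℝ →ₐ[ℝ] MvPolynomial (Fin n ⊕ Fin n) ℂ :=
  aeval (fun j => C ((1 : ℂ) / 2) * (X (Sum.inl j) + X (Sum.inr j)))

noncomputable def expOf {n : ℕ} (k : Fin n → ℕ) : Fin n →₀ ℕ :=
  Finsupp.equivFunOnFinite.symm k

/-!
`LV u` multiplies the coefficient of `z^a z̄^b` by `i ∑ⱼ uⱼ (aⱼ - bⱼ)`, so it vanishes on every
diagonal monomial and the diagonal coefficients of `H₂` are those of `xToZ V₂`. By the binomial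
theorem, the coefficient of `|z|^(2k)` in `xToZ V₂` is that of `x^(2k)` in `V₂` times
`2^(-∑ 2kⱼ) ∏ⱼ C(2kⱼ, kⱼ) ≠ 0`; since all exponents of `V₂` are even, these coefficients
determine `V₂`.
-/

namespace MvPolynomial

open Finset

variable {R σ : Type*} [CommSemiring R]

theorem coeff_X_mul_pderiv (v : σ) (p : MvPolynomial σ R) (d : σ →₀ ℕ) :
    coeff d (X v * pderiv v p) = d v * coeff d p := by
  classical
  induction p using induction_on' with
  | add p q hp hq => simp only [map_add, mul_add, coeff_add, hp, hq]
  | monomial m a =>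
    rw [X_mul_pderiv_monomial, coeff_smul, coeff_monomial, nsmul_eq_mul]
    split_ifs with h
    · rw [h]
    · rw [mul_zero, mul_zero]

theorem coeff_prod_X_inl_add_X_inr_pow [Fintype σ] [DecidableEq σ] (m : σ → ℕ)
    (e : σ ⊕ σ →₀ ℕ) :
    coeff e (∏ j, (X (Sum.inl j) + X (Sum.inr j) : MvPolynomial (σ ⊕ σ) R) ^ m j) =
      if ∀ j, e (Sum.inl j) + e (Sum.inr j) = m j then
        ∏ j, ((m j).choose (e (Sum.inl j)) : R)
      else 0 := by
  let p₀ : σ → ℕ × ℕ := fun j => (e (Sum.inl j), e (Sum.inr j))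
  have hmonomial : ∀ p : σ → ℕ × ℕ,
      (∏ j, X (Sum.inl j) ^ (p j).1) * ∏ j, (X (Sum.inr j) ^ (p j).2 : MvPolynomial (σ ⊕ σ) R) =
        ∏ v, X v ^ Sum.elim (fun j => (p j).1) (fun j => (p j).2) v :=
    fun p => by rw [Fintype.prod_sum_type]; simp only [Sum.elim_inl, Sum.elim_inr]
  have hcoeff : ∀ p : σ → ℕ × ℕ,
      e = Finsupp.indicator univ
          (fun v _ => Sum.elim (fun j => (p j).1) (fun j => (p j).2) v) ↔ p = p₀ := by
    intro p
    simp only [Finsupp.ext_iff, Finsupp.indicator_apply, mem_univ, dite_true,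
      Sum.forall, Sum.elim_inl, Sum.elim_inr, p₀]
    grind
  have hbinom : ∀ j, (X (Sum.inl j) + X (Sum.inr j) : MvPolynomial (σ ⊕ σ) R) ^ m j =
      ∑ q ∈ antidiagonal (m j),
        C ((m j).choose q.1 : R) * (X (Sum.inl j) ^ q.1 * X (Sum.inr j) ^ q.2) := by
    intro j
    rw [(Commute.all _ _).add_pow']
    simp only [nsmul_eq_mul, map_natCast]
  simp_rw [hbinom, prod_univ_sum, prod_mul_distrib, ← map_prod, hmonomial,
    coeff_sum, coeff_C_mul, coeff_prod_X_pow, hcoeff, mul_ite, mul_one, mul_zero]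
  rw [sum_ite_eq']
  simp [p₀]

end MvPolynomial

section NormalForm

variable {n : ℕ}

theorem coeff_LV_eq_zero_of_isDiagExp (u : Fin n → ℝ) (G : MvPolynomial (Fin n ⊕ Fin n) ℂ)
    {d : (Fin n ⊕ Fin n) →₀ ℕ} (hd : IsDiagExp d) : coeff d (LV u G) = 0 := by
  simp only [LV, coeff_C_mul, coeff_sum, coeff_sub, coeff_X_mul_pderiv,
    show ∀ j, d (Sum.inl j) = d (Sum.inr j) from hd, sub_self, mul_zero, Finset.sum_const_zero]

theorem coeff_diagExp_eq_coeff_xToZ_of_LV_eq {u : Fin n → ℝ} {V : MvPolynomial (Fin n) ℝ}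
    {G H : MvPolynomial (Fin n ⊕ Fin n) ℂ} (heq : LV u G = xToZ V - H) (k : Fin n → ℕ) :
    coeff (diagExp k) H = coeff (diagExp k) (xToZ V) := by
  have h := congrArg (coeff (diagExp k)) heq
  rwa [coeff_LV_eq_zero_of_isDiagExp u G (fun _ => rfl), coeff_sub, eq_comm, sub_eq_zero,
    eq_comm] at h

theorem xToZ_monomial (m : Fin n →₀ ℕ) (a : ℝ) :
    xToZ (monomial m a) =
      C ((a : ℂ) * 2⁻¹ ^ (∑ j, m j)) * ∏ j, (X (Sum.inl j) + X (Sum.inr j)) ^ m j := by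
  rw [xToZ, aeval_monomial, Finsupp.prod_fintype _ _ fun _ => pow_zero _]
  simp only [mul_pow, Finset.prod_mul_distrib, ← map_pow, ← map_prod, Finset.prod_pow_eq_pow_sum,
    map_mul, one_div, mul_assoc]
  rfl

theorem coeff_diagExp_xToZ (V : MvPolynomial (Fin n) ℝ) (k : Fin n → ℕ) :
    coeff (diagExp k) (xToZ V) =
      ((coeff (expOf fun j => 2 * k j) V : ℝ) : ℂ) * 2⁻¹ ^ (∑ j, 2 * k j) *
        ∏ j, ((2 * k j).choose (k j) : ℂ) := by
  induction V using induction_on' with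
  | add p q hp hq => simp only [map_add, coeff_add, hp, hq, Complex.ofReal_add, add_mul]
  | monomial m a =>
    have hdiag : (∀ j, diagExp k (Sum.inl j) + diagExp k (Sum.inr j) = m j) ↔
        m = expOf fun j => 2 * k j := by
      simp only [Finsupp.ext_iff, diagExp, expOf, Finsupp.coe_equivFunOnFinite_symm,
        Sum.elim_inl, Sum.elim_inr, two_mul, eq_comm]
    rw [xToZ_monomial, coeff_C_mul, coeff_prod_X_inl_add_X_inr_pow, coeff_monomial]
    split_ifs with h h' h'
    · subst h'
      rfl
    · exact absurd (hdiag.1 h) h'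
    · exact absurd (hdiag.2 h') h
    · simp

theorem coeff_expOf_two_mul_eq_of_coeff_diagExp_xToZ_eq {V V' : MvPolynomial (Fin n) ℝ}
    {k : Fin n → ℕ} (h : coeff (diagExp k) (xToZ V) = coeff (diagExp k) (xToZ V')) :
    coeff (expOf fun j => 2 * k j) V = coeff (expOf fun j => 2 * k j) V' := by
  have hne : (2 : ℂ)⁻¹ ^ (∑ j, 2 * k j) * ∏ j, ((2 * k j).choose (k j) : ℂ) ≠ 0 :=
    mul_ne_zero (by simp) <| Finset.prod_ne_zero_iff.2 fun j _ =>
      Nat.cast_ne_zero.2 (Nat.choose_pos (by omega)).ne'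
  rw [coeff_diagExp_xToZ, coeff_diagExp_xToZ, mul_assoc, mul_assoc] at h
  exact_mod_cast mul_right_cancel₀ hne h

theorem eq_of_coeff_expOf_two_mul_eq {R : Type*} [CommSemiring R] {V V' : MvPolynomial (Fin n) R}
    (heven : ∀ d ∈ V.support, ∀ j, Even (d j)) (heven' : ∀ d ∈ V'.support, ∀ j, Even (d j))
    (h : ∀ k : Fin n → ℕ, coeff (expOf fun j => 2 * k j) V = coeff (expOf fun j => 2 * k j) V') :
    V = V' := by
  ext d
  by_cases hd : ∀ j, Even (d j)
  · have hd2 : d = expOf fun j => 2 * (d j / 2) :=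
      Finsupp.ext fun j => (Nat.mul_div_cancel' (hd j).two_dvd).symm
    rw [hd2, h]
  · rw [notMem_support_iff.1 fun h => hd (heven d h), notMem_support_iff.1 fun h => hd (heven' d h)]

end NormalForm

theorem stmt17_general {n : ℕ} (u : Fin n → ℝ)
    (V2 V2' : MvPolynomial (Fin n) ℝ)
    (heven : ∀ d ∈ V2.support, ∀ j, Even (d j))
    (heven' : ∀ d ∈ V2'.support, ∀ j, Even (d j))
    (G2 H2 G2' H2' : MvPolynomial (Fin n ⊕ Fin n) ℂ)
    (heq : LV u G2 = xToZ V2 - H2)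
    (heq' : LV u G2' = xToZ V2' - H2') :
    (∀ k : Fin n → ℕ, (∑ j, k j) = 2 →
      coeff (diagExp k) H2
        = ((coeff (expOf fun j => 2 * k j) V2 : ℝ) : ℂ) * ((4 : ℂ) ^ 2)⁻¹ *
            ∏ j, (Nat.choose (2 * k j) (k j) : ℂ)) ∧
    (H2 = H2' → V2 = V2') := by
  constructor
  · intro k hk
    rw [coeff_diagExp_eq_coeff_xToZ_of_LV_eq heq, coeff_diagExp_xToZ, ← Finset.mul_sum, hk]
    norm_num
  · intro hH
    refine eq_of_coeff_expOf_two_mul_eq heven heven' fun k => ?_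
    apply coeff_expOf_two_mul_eq_of_coeff_diagExp_xToZ_eq
    rw [← coeff_diagExp_eq_coeff_xToZ_of_LV_eq heq, ← coeff_diagExp_eq_coeff_xToZ_of_LV_eq heq', hH]

theorem stmt17 {n : ℕ} (u : Fin n → ℝ) (hpos : ∀ j, 0 < u j) (hind : LinIndepQ u)
    (V2 V2' : MvPolynomial (Fin n) ℝ)
    (hV2 : V2.IsHomogeneous 4) (hV2' : V2'.IsHomogeneous 4)
    (heven : ∀ d ∈ V2.support, ∀ j, Even (d j))
    (heven' : ∀ d ∈ V2'.support, ∀ j, Even (d j))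
    (G2 H2 G2' H2' : MvPolynomial (Fin n ⊕ Fin n) ℂ)
    (hG2 : IsOffDiagPoly 2 G2) (hH2 : IsDiagPoly 2 H2)
    (heq : LV u G2 = xToZ V2 - H2)
    (hG2' : IsOffDiagPoly 2 G2') (hH2' : IsDiagPoly 2 H2')
    (heq' : LV u G2' = xToZ V2' - H2') :
    (∀ k : Fin n → ℕ, (∑ j, k j) = 2 →
      coeff (diagExp k) H2
        = ((coeff (expOf fun j => 2 * k j) V2 : ℝ) : ℂ) * ((4 : ℂ) ^ 2)⁻¹ *
            ∏ j, (Nat.choose (2 * k j) (k j) : ℂ)) ∧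
    (H2 = H2' → V2 = V2') :=
  stmt17_general u V2 V2' heven heven' G2 H2 G2' H2' heq heq'
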